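/- Let A, B be positive bounded operators on a Hilbert space H with R(A) ∩ closure(R(B)) = {0}. Then R(A+B) = R(A) + R(B) if and only if the pair (A, N(B)) is compatible, i.e., N(B) + (A·N(B))^⊥ = H. -/

import Mathlib

/-!
Once `R(A) ∩ R(B) = 0`, range additivity `R(A + B) = R(A) + R(B)` amounts to `R(A) ⊆ R(A + B)`,
and this holds exactly when `N(A) + N(B) = H`. For self-adjoint `A` and `B` one has
`(A N(B))ᗮ = A⁻¹(N(B)ᗮ) = A⁻¹(closure R(B))`, and disjointness of `R(A)` from `closure R(B)`
shrinks this preimage to `N(A)`; so compatibility of `(A, N(B))` is the same condition.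
-/

open ContinuousLinearMap

namespace LinearMap

variable {R M M₂ : Type*} [Ring R] [AddCommGroup M] [AddCommGroup M₂] [Module R M] [Module R M₂]

theorem range_add_eq_sup_iff_range_le (f g : M →ₗ[R] M₂) :
    range (f + g) = range f ⊔ range g ↔ range f ≤ range (f + g) := by
  refine ⟨fun h ↦ h ▸ le_sup_left, fun hf ↦ (range_add_le f g).antisymm (sup_le hf ?_)⟩
  rintro _ ⟨x, rfl⟩
  simpa using sub_mem (mem_range_self (f + g) x) (hf (mem_range_self f x))

theorem range_le_range_add_iff_ker_sup_ker_eq_top {f g : M →ₗ[R] M₂}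
    (hfg : Disjoint (range f) (range g)) : range f ≤ range (f + g) ↔ ker f ⊔ ker g = ⊤ := by
  constructor
  · intro hf
    refine Submodule.eq_top_iff'.mpr fun x ↦ ?_
    obtain ⟨z, hz⟩ := hf (mem_range_self f x)
    have hfg_eq : f (x - z) = g z := by
      rw [map_sub, ← hz, add_apply]; abel
    have hgz : g z = 0 :=
      Submodule.disjoint_def.mp hfg _ (hfg_eq ▸ mem_range_self f _) (mem_range_self g z)
    refine Submodule.mem_sup.mpr ⟨x - z, ?_, z, hgz, sub_add_cancel x z⟩
    rw [mem_ker, hfg_eq, hgz]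
  · rintro hker _ ⟨x, rfl⟩
    obtain ⟨a, ha, b, hb, rfl⟩ :=
      Submodule.mem_sup.mp (hker ▸ Submodule.mem_top : x ∈ ker f ⊔ ker g)
    refine ⟨b, ?_⟩
    rw [mem_ker] at ha hb
    simp [ha, hb]

theorem comap_eq_ker_of_disjoint_range (f : M →ₗ[R] M₂) {p : Submodule R M₂}
    (h : Disjoint (range f) p) : p.comap f = ker f :=
  le_antisymm (fun x hx ↦ Submodule.disjoint_def.mp h _ (mem_range_self f x) hx)
    (ker_le_comap f)

end LinearMap

section InnerProduct

variable {𝕜 E : Type*} [RCLike 𝕜] [NormedAddCommGroup E] [InnerProductSpace 𝕜 E]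

theorem LinearMap.IsSymmetric.orthogonal_map {T : E →ₗ[𝕜] E} (hT : T.IsSymmetric)
    (S : Submodule 𝕜 E) : (S.map T)ᗮ = Sᗮ.comap T := by
  ext x
  simp [Submodule.mem_orthogonal, hT _ x]

theorem IsSelfAdjoint.orthogonal_ker [CompleteSpace E] {T : E →L[𝕜] E} (hT : IsSelfAdjoint T) :
    (LinearMap.ker (T : E →ₗ[𝕜] E))ᗮ = (LinearMap.range (T : E →ₗ[𝕜] E)).topologicalClosure := by
  rw [T.orthogonal_ker, hT.adjoint_eq]

theorem orthogonal_map_ker_eq_ker_of_disjoint {A B : E →L[𝕜] E} [CompleteSpace E]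
    (hA : (A : E →ₗ[𝕜] E).IsSymmetric) (hB : IsSelfAdjoint B)
    (h : Disjoint (LinearMap.range (A : E →ₗ[𝕜] E))
      (LinearMap.range (B : E →ₗ[𝕜] E)).topologicalClosure) :
    ((LinearMap.ker (B : E →ₗ[𝕜] E)).map (A : E →ₗ[𝕜] E))ᗮ = LinearMap.ker (A : E →ₗ[𝕜] E) := by
  rw [hA.orthogonal_map, hB.orthogonal_ker, LinearMap.comap_eq_ker_of_disjoint_range _ h]

end InnerProduct

variable {H : Type*} [NormedAddCommGroup H] [InnerProductSpace ℂ H] [CompleteSpace H]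

theorem range_additivity_iff_compatible_disjoint (A B : H →L[ℂ] H)
    (hA : A.IsPositive) (hB : B.IsPositive)
    (h : LinearMap.range (A : H →ₗ[ℂ] H) ⊓ (LinearMap.range (B : H →ₗ[ℂ] H)).topologicalClosure = ⊥) :
    LinearMap.range ((A + B : H →L[ℂ] H) : H →ₗ[ℂ] H) = LinearMap.range (A : H →ₗ[ℂ] H) ⊔ LinearMap.range (B : H →ₗ[ℂ] H) ↔
      LinearMap.ker (B : H →ₗ[ℂ] H) ⊔ (Submodule.map (A : H →ₗ[ℂ] H) (LinearMap.ker (B : H →ₗ[ℂ] H)))ᗮ = ⊤ := by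
  have hdisj := disjoint_iff.mpr h
  rw [toLinearMap_add, LinearMap.range_add_eq_sup_iff_range_le,
    LinearMap.range_le_range_add_iff_ker_sup_ker_eq_top
      (hdisj.mono_right (Submodule.le_topologicalClosure _)),
    orthogonal_map_ker_eq_ker_of_disjoint hA.isSymmetric hB.isSelfAdjoint hdisj, sup_comm]
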